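/- Let 0 < y < 1 and let a > 0 with a ∉ [1−√y, 1+√y]; set φ(a) = a + ya/(a−1). Then m₆(φ(a)) = ∫ x²/(φ(a)−x)⁴ dF_y(x) = (a−1)⁴[(a−1+y)² + a²y] / ((a−1)² − y)⁵. -/

import Mathlib

open MeasureTheory Real

/-- Density of the Marčenko–Pastur distribution with ratio parameter `c` (the absolutely
continuous part; it vanishes outside `[(1-√c)², (1+√c)²]`). -/
noncomputable def mpDensity (c x : ℝ) : ℝ :=
  if (1 - Real.sqrt c) ^ 2 ≤ x ∧ x ≤ (1 + Real.sqrt c) ^ 2 then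
    Real.sqrt ((x - (1 - Real.sqrt c) ^ 2) * ((1 + Real.sqrt c) ^ 2 - x)) /
      (2 * Real.pi * c * x)
  else 0

/-- The Marčenko–Pastur law with ratio parameter `c > 0`: an atom of mass `max (1 - 1/c) 0`
at `0` plus the absolutely continuous part with density `mpDensity c`.  For `c < 1` (in
particular for `c = y ∈ (0,1)`) the atom vanishes and this is the measure `F_y` with density
`(1/(2πxy))√((x-a_y)(b_y-x))` on `[a_y, b_y]`, `a_y = (1-√y)²`, `b_y = (1+√y)²`. -/
noncomputable def mpLaw (c : ℝ) : Measure ℝ :=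
  ENNReal.ofReal (1 - 1 / c) • Measure.dirac 0 +
    (volume : Measure ℝ).withDensity fun x => ENNReal.ofReal (mpDensity c x)

/-- The map `φ(a) = a + ya/(a-1)` sending a spike outside `[1-√y, 1+√y]` to the a.s. limit
of the corresponding extreme sample eigenvalue, outside the Marčenko–Pastur support. -/
noncomputable def phiSpike (y a : ℝ) : ℝ := a + y * a / (a - 1)

/-!
On its support the Marčenko–Pastur law is `√(4y - u²) / (2πy x) dx` with `x = 1 + y + u`,
`|u| ≤ 2√y`. Writing `φ(a) = 1 + y + d`, `m₆(φ(a))` is therefore `(2πy)⁻¹` times the elementary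
integral `∫_{-r}^{r} (m + u) √(r² - u²) / (d - u)⁴ du` with `m = 1 + y`, `r = 2√y`. It has the
explicit primitive `N(u) √(r² - u²) / (d - u)³ - C arcsin ((r² - d u) / (r (d - u)))` with `N`
quadratic, and equals `π r² (m d + r²) / (2 P⁵)`, where `P` is the square root of `d² - r²` with
the sign of `d`. For the spike, `d = ((a-1)² + y)/(a-1)` and `P = ((a-1)² - y)/(a-1)`.
-/

section SemicircleQuartic

variable (m r d P : ℝ)

noncomputable def semicircleQuarticPoly (u : ℝ) : ℝ :=
  ((2 * d ^ 3 - 5 * r ^ 2 * d - m * d ^ 2 - 2 * m * r ^ 2) * u ^ 2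
    + 3 * (d ^ 2 + r ^ 2) * (r ^ 2 + m * d) * u
    + (-2 * r ^ 2 * d ^ 3 - r ^ 4 * d - 5 * m * r ^ 2 * d ^ 2 + 2 * m * r ^ 4))
    / (6 * (d ^ 2 - r ^ 2) ^ 2)

noncomputable def semicircleQuarticPolyDeriv (u : ℝ) : ℝ :=
  (2 * (2 * d ^ 3 - 5 * r ^ 2 * d - m * d ^ 2 - 2 * m * r ^ 2) * u
    + 3 * (d ^ 2 + r ^ 2) * (r ^ 2 + m * d)) / (6 * (d ^ 2 - r ^ 2) ^ 2)

noncomputable def semicircleQuarticPrimitive (u : ℝ) : ℝ :=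
  semicircleQuarticPoly m r d u * √(r ^ 2 - u ^ 2) / (d - u) ^ 3
    - r ^ 2 * (m * d + r ^ 2) / (2 * (d ^ 2 - r ^ 2) ^ 2 * P)
      * arcsin ((r ^ 2 - d * u) / (r * (d - u)))

variable {m r d P}

lemma hasDerivAt_semicircleQuarticPoly (u : ℝ) :
    HasDerivAt (semicircleQuarticPoly m r d) (semicircleQuarticPolyDeriv m r d u) u := by
  unfold semicircleQuarticPoly semicircleQuarticPolyDeriv
  refine HasDerivAt.div_const ?_ _
  refine ((((hasDerivAt_pow 2 u).const_mul _).add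
    ((hasDerivAt_id u).const_mul _)).add_const _).congr_deriv ?_
  ring

/-- Divided by `√(r² - u²) (d - u)⁴`, this says that `semicircleQuarticPrimitive` differentiates
to the integrand; it is what determines the coefficients of `semicircleQuarticPoly`. -/
lemma semicircleQuarticPoly_ode (hdr : d ^ 2 - r ^ 2 ≠ 0) (u : ℝ) :
    (semicircleQuarticPolyDeriv m r d u * (r ^ 2 - u ^ 2) - semicircleQuarticPoly m r d u * u)
        * (d - u) + 3 * semicircleQuarticPoly m r d u * (r ^ 2 - u ^ 2)
      + r ^ 2 * (m * d + r ^ 2) / (2 * (d ^ 2 - r ^ 2) ^ 2) * (d - u) ^ 3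
      = (m + u) * (r ^ 2 - u ^ 2) := by
  unfold semicircleQuarticPoly semicircleQuarticPolyDeriv
  field_simp
  ring

lemma mul_sub_pos_of_sq_eq (hP : P ^ 2 = d ^ 2 - r ^ 2) (hdP : 0 < d * P) {u : ℝ}
    (hu : |u| ≤ r) : 0 < P * (d - u) := by
  have hP0 : 0 < P ^ 2 := by
    have : P ≠ 0 := by rintro rfl; simp at hdP
    positivity
  rw [abs_le] at hu
  rcases mul_pos_iff.mp hdP with ⟨hd, hPpos⟩ | ⟨hd, hPneg⟩
  · exact mul_pos hPpos (by nlinarith)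
  · exact mul_pos_of_neg_of_neg hPneg (by nlinarith)

lemma sqrt_one_sub_sq_semicircleArg (hr : 0 < r) (hP : P ^ 2 = d ^ 2 - r ^ 2)
    {u : ℝ} (hPu : 0 < P * (d - u)) (hu : u ^ 2 ≤ r ^ 2) :
    √(1 - ((r ^ 2 - d * u) / (r * (d - u))) ^ 2) = P * √(r ^ 2 - u ^ 2) / (r * (d - u)) := by
  have hdu : d - u ≠ 0 := by rintro h; simp [h] at hPu
  have hS := sq_sqrt (sub_nonneg.mpr hu)
  rw [← sqrt_sq (x := P * √(r ^ 2 - u ^ 2) / (r * (d - u)))]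
  · congr 1
    simp only [div_pow, mul_pow, hS]
    field_simp
    linear_combination (u ^ 2 - r ^ 2) * hP
  · rw [show P * √(r ^ 2 - u ^ 2) / (r * (d - u))
        = P * (d - u) * √(r ^ 2 - u ^ 2) / (r * (d - u) ^ 2) by field_simp]
    positivity

lemma hasDerivAt_arcsin_semicircleArg (hr : 0 < r) (hP : P ^ 2 = d ^ 2 - r ^ 2)
    {u : ℝ} (hPu : 0 < P * (d - u)) (hu : u ^ 2 < r ^ 2) :
    HasDerivAt (fun t => arcsin ((r ^ 2 - d * t) / (r * (d - t))))
      (-P / ((d - u) * √(r ^ 2 - u ^ 2))) u := by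
  have hdu : d - u ≠ 0 := by rintro h; simp [h] at hPu
  have hS : 0 < √(r ^ 2 - u ^ 2) := sqrt_pos.mpr (by linarith)
  have hsqrt := sqrt_one_sub_sq_semicircleArg hr hP hPu hu.le
  have hg : HasDerivAt (fun t => (r ^ 2 - d * t) / (r * (d - t)))
      (-P ^ 2 / (r * (d - u) ^ 2)) u := by
    refine (((hasDerivAt_id u).const_mul d).const_sub (r ^ 2) |>.div
      (((hasDerivAt_id u).const_sub d).const_mul r) (mul_ne_zero hr.ne' hdu)).congr_deriv ?_
    simp only [id_eq]
    rw [hP]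
    field_simp
    ring
  have hsq_ne : 1 - ((r ^ 2 - d * u) / (r * (d - u))) ^ 2 ≠ 0 := by
    intro h
    rw [h, sqrt_zero] at hsqrt
    have : P * √(r ^ 2 - u ^ 2) / (r * (d - u)) ≠ 0 := by
      have : P ≠ 0 := by rintro rfl; simp at hPu
      positivity
    exact this hsqrt.symm
  have h1 : (r ^ 2 - d * u) / (r * (d - u)) ≠ -1 := fun h => hsq_ne (by rw [h]; norm_num)
  have h2 : (r ^ 2 - d * u) / (r * (d - u)) ≠ 1 := fun h => hsq_ne (by rw [h]; norm_num)
  refine ((hasDerivAt_arcsin h1 h2).comp u hg).congr_deriv ?_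
  rw [hsqrt]
  have : P ≠ 0 := by rintro rfl; simp at hPu
  field_simp

lemma hasDerivAt_semicircleQuarticPrimitive (hr : 0 < r) (hP : P ^ 2 = d ^ 2 - r ^ 2)
    (hdP : 0 < d * P) {u : ℝ} (hu : |u| < r) :
    HasDerivAt (semicircleQuarticPrimitive m r d P)
      ((m + u) * √(r ^ 2 - u ^ 2) / (d - u) ^ 4) u := by
  have hPu := mul_sub_pos_of_sq_eq hP hdP hu.le
  have hdu : d - u ≠ 0 := by rintro h; simp [h] at hPu
  have hP0 : P ≠ 0 := by rintro rfl; simp at hPu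
  have hu2 : u ^ 2 < r ^ 2 := sq_lt_sq' (abs_lt.mp hu).1 (abs_lt.mp hu).2
  have hdr : d ^ 2 - r ^ 2 ≠ 0 := by rw [← hP]; positivity
  have hS : HasDerivAt (fun t => √(r ^ 2 - t ^ 2)) (-(2 * u) / (2 * √(r ^ 2 - u ^ 2))) u := by
    refine (((hasDerivAt_pow 2 u).const_sub (r ^ 2)).sqrt (by linarith)).congr_deriv ?_
    ring
  have hpoly := ((hasDerivAt_semicircleQuarticPoly (m := m) (r := r) (d := d) u).mul hS).div
    (((hasDerivAt_id u).const_sub d).pow 3) (pow_ne_zero 3 hdu)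
  have harc := (hasDerivAt_arcsin_semicircleArg hr hP hPu hu2).const_mul
    (r ^ 2 * (m * d + r ^ 2) / (2 * (d ^ 2 - r ^ 2) ^ 2 * P))
  refine (hpoly.sub harc).congr_deriv ?_
  have hode := semicircleQuarticPoly_ode (m := m) hdr u
  have hS2 := sq_sqrt (sub_nonneg.mpr hu2.le)
  have hSpos : 0 < √(r ^ 2 - u ^ 2) := sqrt_pos.mpr (by linarith)
  rw [← hS2] at hode
  simp only [Pi.mul_apply, Pi.pow_apply, id_eq]
  generalize √(r ^ 2 - u ^ 2) = S at *
  generalize semicircleQuarticPoly m r d u = N at *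
  generalize semicircleQuarticPolyDeriv m r d u = N' at *
  field_simp at hode ⊢
  linear_combination (d - u) ^ 2 * hode

lemma continuousOn_semicircleQuarticPrimitive (hr : 0 < r) (hP : P ^ 2 = d ^ 2 - r ^ 2)
    (hdP : 0 < d * P) : ContinuousOn (semicircleQuarticPrimitive m r d P) (Set.Icc (-r) r) := by
  have hdu : ∀ u ∈ Set.Icc (-r) r, d - u ≠ 0 := fun u hu h => by
    simpa [h] using mul_sub_pos_of_sq_eq hP hdP (abs_le.mpr hu)
  unfold semicircleQuarticPrimitive semicircleQuarticPoly
  refine ContinuousOn.sub ?_ (continuousOn_const.mul (continuous_arcsin.comp_continuousOn ?_))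
  · exact ContinuousOn.div (by fun_prop) (by fun_prop) fun u hu => pow_ne_zero 3 (hdu u hu)
  · exact ContinuousOn.div (by fun_prop) (by fun_prop) fun u hu => mul_ne_zero hr.ne' (hdu u hu)

theorem integral_semicircleQuartic (hr : 0 < r) (hP : P ^ 2 = d ^ 2 - r ^ 2)
    (hdP : 0 < d * P) :
    ∫ u in -r..r, (m + u) * √(r ^ 2 - u ^ 2) / (d - u) ^ 4
      = π * r ^ 2 * (m * d + r ^ 2) / (2 * P ^ 5) := by
  have hdu : ∀ u ∈ Set.Icc (-r) r, d - u ≠ 0 := fun u hu h => by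
    simpa [h] using mul_sub_pos_of_sq_eq hP hdP (abs_le.mpr hu)
  have hint : IntervalIntegrable (fun u => (m + u) * √(r ^ 2 - u ^ 2) / (d - u) ^ 4)
      volume (-r) r := by
    refine ContinuousOn.intervalIntegrable ?_
    rw [Set.uIcc_of_le (by linarith)]
    exact ContinuousOn.div (by fun_prop) (by fun_prop) fun u hu => pow_ne_zero 4 (hdu u hu)
  rw [intervalIntegral.integral_eq_sub_of_hasDerivAt_of_le (by linarith)
    (continuousOn_semicircleQuarticPrimitive hr hP hdP)
    (fun u hu => hasDerivAt_semicircleQuarticPrimitive hr hP hdP (abs_lt.mpr hu)) hint]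
  have hdr : d - r ≠ 0 := hdu r ⟨by linarith, le_rfl⟩
  have hdr' : d + r ≠ 0 := by simpa using hdu (-r) ⟨le_rfl, by linarith⟩
  have hP0 : P ≠ 0 := by rintro rfl; simp at hdP
  have h1 : (r ^ 2 - d * r) / (r * (d - r)) = -1 := by field_simp; ring
  have h2 : (r ^ 2 - d * -r) / (r * (d - -r)) = 1 := by
    rw [div_eq_one_iff_eq (by simpa using mul_ne_zero hr.ne' hdr')]; ring
  simp only [semicircleQuarticPrimitive, h1, h2, arcsin_neg_one, arcsin_one, sub_self,
    sqrt_zero, mul_zero, zero_div, neg_sq]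
  rw [← hP]
  field_simp
  ring

end SemicircleQuartic

section MarchenkoPastur

variable {c : ℝ}

lemma mpLaw_eq_withDensity (hc0 : 0 < c) (hc1 : c ≤ 1) :
    mpLaw c = volume.withDensity fun x => ENNReal.ofReal (mpDensity c x) := by
  have : 1 - 1 / c ≤ 0 := by rw [sub_nonpos]; exact one_le_one_div hc0 hc1
  rw [mpLaw, ENNReal.ofReal_of_nonpos this, zero_smul, zero_add]

lemma mpDensity_nonneg (hc : 0 ≤ c) (x : ℝ) : 0 ≤ mpDensity c x := by
  unfold mpDensity
  split_ifs with h
  · have : 0 ≤ x := (sq_nonneg _).trans h.1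
    positivity
  · exact le_rfl

lemma measurable_mpDensity (c : ℝ) : Measurable (mpDensity c) :=
  Measurable.ite measurableSet_Icc (by fun_prop) measurable_const

lemma mpDensity_one_add_add (hc : 0 ≤ c) {u : ℝ} (hu : |u| ≤ 2 * √c) :
    mpDensity c (1 + c + u) = √(4 * c - u ^ 2) / (2 * π * c * (1 + c + u)) := by
  have hsq := sq_sqrt hc
  rw [abs_le] at hu
  rw [mpDensity, if_pos ⟨by linear_combination hu.1 + hsq, by linear_combination hu.2 - hsq⟩]
  congr 2
  linear_combination (4 + 2 * u - (√c ^ 2 - c)) * hsq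

theorem integral_mpLaw (hc0 : 0 < c) (hc1 : c ≤ 1) (f : ℝ → ℝ) :
    ∫ x, f x ∂mpLaw c
      = (2 * π * c)⁻¹ *
          ∫ u in -(2 * √c)..2 * √c, √(4 * c - u ^ 2) / (1 + c + u) * f (1 + c + u) := by
  have hsq := sq_sqrt hc0.le
  have hab : (1 - √c) ^ 2 ≤ (1 + √c) ^ 2 := by nlinarith [sqrt_nonneg c]
  calc ∫ x, f x ∂mpLaw c = ∫ x, mpDensity c x * f x := by
        rw [mpLaw_eq_withDensity hc0 hc1, integral_withDensity_eq_integral_toReal_smul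
          (measurable_mpDensity c).ennreal_ofReal (by simp)]
        simp only [ENNReal.toReal_ofReal (mpDensity_nonneg hc0.le _), smul_eq_mul]
    _ = ∫ x in (1 - √c) ^ 2..(1 + √c) ^ 2, mpDensity c x * f x := by
        rw [intervalIntegral.integral_of_le hab, ← integral_Icc_eq_integral_Ioc,
          ← integral_indicator measurableSet_Icc]
        refine integral_congr_ae (Filter.Eventually.of_forall fun x => ?_)
        by_cases hx : x ∈ Set.Icc ((1 - √c) ^ 2) ((1 + √c) ^ 2)
        · rw [Set.indicator_of_mem hx]
        · rw [Set.indicator_of_notMem hx]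
          simp only [mpDensity, Set.mem_Icc] at hx ⊢
          rw [if_neg hx, zero_mul]
    _ = ∫ u in -(2 * √c)..2 * √c, mpDensity c (1 + c + u) * f (1 + c + u) := by
        rw [intervalIntegral.integral_comp_add_left (fun x => mpDensity c x * f x)]
        congr 1 <;> linear_combination hsq
    _ = _ := by
        rw [← intervalIntegral.integral_const_mul]
        refine intervalIntegral.integral_congr fun u hu => ?_
        rw [Set.uIcc_of_le (by linarith [sqrt_nonneg c])] at hu
        rw [mpDensity_one_add_add hc0.le (abs_le.mpr hu)]
        generalize 1 + c + u = x
        ring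

theorem integral_sq_div_pow_four_mpLaw (hc0 : 0 < c) (hc1 : c < 1) {d P : ℝ}
    (hP : P ^ 2 = d ^ 2 - 4 * c) (hdP : 0 < d * P) :
    ∫ x, x ^ 2 / (1 + c + d - x) ^ 4 ∂mpLaw c = ((1 + c) * d + 4 * c) / P ^ 5 := by
  set r := 2 * √c with hr
  have hr2 : r ^ 2 = 4 * c := by rw [hr, mul_pow, sq_sqrt hc0.le]; norm_num
  have hs1 : √c < 1 := (sqrt_lt' one_pos).mpr (by linarith)
  rw [integral_mpLaw hc0 hc1.le, intervalIntegral.integral_congr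
    (g := fun u => (1 + c + u) * √(r ^ 2 - u ^ 2) / (d - u) ^ 4) fun u hu => ?_,
    integral_semicircleQuartic (by positivity) (hr2 ▸ hP) hdP, hr2]
  · field_simp
    ring
  · rw [Set.uIcc_of_le (by linarith [sqrt_nonneg c])] at hu
    have hx : 1 + c + u ≠ 0 := by
      nlinarith [hu.1, sq_pos_of_pos (sub_pos.mpr hs1), sq_sqrt hc0.le]
    simp only [hr2]
    field_simp
    ring

end MarchenkoPastur

lemma lt_sq_sub_one_of_notMem_Icc {s a : ℝ} (hs : 0 ≤ s) (ha : a ∉ Set.Icc (1 - s) (1 + s)) :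
    s ^ 2 < (a - 1) ^ 2 := by
  by_contra! h
  obtain ⟨h₁, h₂⟩ := abs_le_of_sq_le_sq' h hs
  exact ha ⟨by linarith, by linarith⟩

theorem mp_m6_phi_general (y a : ℝ) (hy0 : 0 < y) (hy1 : y < 1)
    (hout : a ∉ Set.Icc (1 - Real.sqrt y) (1 + Real.sqrt y)) :
    (∫ x, x ^ 2 / (phiSpike y a - x) ^ 4 ∂mpLaw y) =
      (a - 1) ^ 4 * ((a - 1 + y) ^ 2 + a ^ 2 * y) / ((a - 1) ^ 2 - y) ^ 5 := by
  have hspike : y < (a - 1) ^ 2 := sq_sqrt hy0.le ▸ lt_sq_sub_one_of_notMem_Icc (sqrt_nonneg y) hout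
  have ha1 : a - 1 ≠ 0 := fun h => by simp [h] at hspike; linarith
  have hphi : phiSpike y a = 1 + y + ((a - 1) ^ 2 + y) / (a - 1) := by
    rw [phiSpike]; field_simp; ring
  have hP : (((a - 1) ^ 2 - y) / (a - 1)) ^ 2 = (((a - 1) ^ 2 + y) / (a - 1)) ^ 2 - 4 * y := by
    field_simp; ring
  have hdP : 0 < ((a - 1) ^ 2 + y) / (a - 1) * (((a - 1) ^ 2 - y) / (a - 1)) := by
    rw [div_mul_div_comm]
    exact div_pos (mul_pos (by positivity) (by linarith)) (mul_self_pos.mpr ha1)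
  rw [hphi, integral_sq_div_pow_four_mpLaw hy0 hy1 hP hdP]
  field_simp
  ring

/-- `m₆(φ(a)) = ∫ x²/(φ(a)−x)⁴ dF_y(x) = (a−1)⁴((a−1+y)² + a²y) / ((a−1)²−y)⁵`. -/
theorem mp_m6_phi (y a : ℝ) (hy0 : 0 < y) (hy1 : y < 1) (ha : 0 < a)
    (hout : a ∉ Set.Icc (1 - Real.sqrt y) (1 + Real.sqrt y)) :
    (∫ x, x ^ 2 / (phiSpike y a - x) ^ 4 ∂mpLaw y) =
      (a - 1) ^ 4 * ((a - 1 + y) ^ 2 + a ^ 2 * y) / ((a - 1) ^ 2 - y) ^ 5 :=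
  mp_m6_phi_general y a hy0 hy1 hout
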